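/- Correctness of compilation, pattern matches: let m = (case d of {C_1 v⃗ → e_1; …; C_c v⃗ → e_c}) be a complete pattern match on a discriminant d of a type T with c constructors, where d and each branch body e_1,…,e_c are compiled correctly. Then m is compiled correctly, i.e. for every abstract environment e and assignment σ, decode(avalue(e, compile(m)), σ) = cvalue(decode(e,σ), m). -/

import Mathlib

/-- Abstract values over propositional variables `V`: a list of (semantic) formulas
(the *flags*) together with a list of abstract values (the *arguments*). -/
inductive AVal (V : Type) : Type where
  | mk : List ((V → Bool) → Bool) → List (AVal V) → AVal V

/-- The flags of an abstract value. -/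
def AVal.flags {V : Type} : AVal V → List ((V → Bool) → Bool)
  | .mk f _ => f

/-- The arguments of an abstract value. -/
def AVal.args {V : Type} : AVal V → List (AVal V)
  | .mk _ a => a

/-- A signature: every type symbol `T` gets a nonempty finite list of constructors,
each given by its finite list of argument type symbols. -/
structure Signature (τ : Type) where
  ctors : τ → List (List τ)
  ctors_ne : ∀ T, ctors T ≠ []

/-- Untyped data terms; the first component is the (1-based) rank of the
constructor. -/
inductive Value : Type where
  | mk : ℕ → List Value → Value

/-- Well-typed concrete values of type `T`: `C_i(v_1, …, v_n)` where `C_i` is the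
`i`-th constructor of `T` with argument types `T_1, …, T_n` and each `v_j` is a
well-typed value of type `T_j`. -/
inductive WT {τ : Type} (sig : Signature τ) : τ → Value → Prop where
  | mk {T : τ} {i : ℕ} {argTys : List τ} {vals : List Value} :
      1 ≤ i → (sig.ctors T)[i - 1]? = some argTys →
      List.Forall₂ (WT sig) argTys vals → WT sig T (.mk i vals)

/-- `numeric n w = some i` iff `w` has a (unique) prefix `u ∈ S n` of lexicographic
rank `i` in `S n`; extra bits beyond the prefix are ignored. -/
def numeric : ℕ → List Bool → Option ℕ
  | 0, _ => none
  | 1, _ => some 1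
  | _ + 2, [] => none
  | n + 2, false :: w => numeric ((n + 2 + 1) / 2) w
  | n + 2, true :: w => (numeric ((n + 2) / 2) w).map (fun i => (n + 2 + 1) / 2 + i)
termination_by n _ => n
decreasing_by all_goals omega

/-- `strOf n i` is the element of `S n` of lexicographic rank `i` (for `1 ≤ i ≤ n`). -/
def strOf : ℕ → ℕ → List Bool
  | 0, _ => []
  | 1, _ => []
  | n + 2, i =>
      if i ≤ (n + 2 + 1) / 2 then false :: strOf ((n + 2 + 1) / 2) i
      else true :: strOf ((n + 2) / 2) (i - (n + 2 + 1) / 2)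
termination_by n _ => n
decreasing_by all_goals omega
mutual
  /-- Encoding of a concrete value of type `T` as an abstract value: the flags are
  constant formulas representing the rank-`i` element of `S c(T)`, and the arguments
  are the encodings of the constructor arguments at their respective types. -/
  def encode {V τ : Type} (sig : Signature τ) : τ → Value → AVal V
    | T, .mk i vals =>
        .mk ((strOf (sig.ctors T).length i).map (fun b => fun _ => b))
          (encodeList sig ((sig.ctors T).getD (i - 1) []) vals)
  termination_by _ v => sizeOf v

  /-- Pointwise encoding of a list of values at a list of types. -/
  def encodeList {V τ : Type} (sig : Signature τ) : List τ → List Value → List (AVal V)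
    | t :: ts, v :: vs => encode sig t v :: encodeList sig ts vs
    | _, _ => []
  termination_by _ vs => sizeOf vs
end

mutual
  /-- Decoding of an abstract value at type `T` under an assignment `σ` (a partial
  function): the flags are evaluated under `σ`; if the resulting bit string has a
  prefix in `S c(T)` determining constructor rank `i` of `T`, and there are enough
  arguments, the first arguments are decoded at the argument types of the `i`-th
  constructor of `T`; otherwise decoding is undefined. -/
  def decode {V τ : Type} (sig : Signature τ) : τ → AVal V → (V → Bool) → Option Value
    | T, .mk flags args, σ =>
        match numeric (sig.ctors T).length (flags.map (fun f => f σ)) with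
        | none => none
        | some i =>
            match (sig.ctors T)[i - 1]? with
            | none => none
            | some argTys =>
                if argTys.length ≤ args.length then
                  (decodeList sig argTys args σ).map (Value.mk i)
                else none
  termination_by _ a _ => sizeOf a

  /-- Pointwise decoding of (a prefix of) a list of abstract values at a list of
  types. -/
  def decodeList {V τ : Type} (sig : Signature τ) :
      List τ → List (AVal V) → (V → Bool) → Option (List Value)
    | [], _, _ => some []
    | _ :: _, [], _ => none
    | t :: ts, a :: as, σ =>
        match decode sig t a σ with
        | none => none
        | some v => (decodeList sig ts as σ).map (fun vs => v :: vs)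
  termination_by _ as _ => sizeOf as
end
lemma AVal.one_le_sizeOf_list {V : Type} (l : List (AVal V)) : 1 ≤ sizeOf l := by
  cases l <;> simp <;> omega

lemma AVal.sizeOf_getD_le {V : Type} (a : AVal V) (j : ℕ) :
    sizeOf (a.args.getD j (AVal.mk [] [])) ≤ sizeOf a := by
  cases a with
  | mk f args =>
      simp only [AVal.args]
      by_cases h : j < args.length
      · have hm : args.getD j (AVal.mk [] []) ∈ args := by
          rw [List.getD_eq_getElem _ _ h]; exact List.getElem_mem h
        have := List.sizeOf_lt_of_mem hm
        simp only [AVal.mk.sizeOf_spec]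
        have := AVal.one_le_sizeOf_list (V := V) []
        omega
      · rw [List.getD_eq_default _ _ (by omega)]
        simp only [AVal.mk.sizeOf_spec]
        have h1 : 1 ≤ sizeOf f := by cases f <;> simp <;> omega
        have h2 := AVal.one_le_sizeOf_list args
        have h3 := AVal.one_le_sizeOf_list (V := V) []
        simp at h3 ⊢
        omega

lemma AVal.sizeOf_getD_lt {V : Type} (a : AVal V) (j : ℕ) (h : j < a.args.length) :
    sizeOf (a.args.getD j (AVal.mk [] [])) < sizeOf a := by
  cases a with
  | mk f args =>
      simp only [AVal.args] at h ⊢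
      have hm : args.getD j (AVal.mk [] []) ∈ args := by
        rw [List.getD_eq_getElem _ _ h]; exact List.getElem_mem h
      have := List.sizeOf_lt_of_mem hm
      simp only [AVal.mk.sizeOf_spec]
      omega

lemma merge_dec {V : Type} (as : List (AVal V)) (j : ℕ)
    (hj : j < (as.map (fun a => a.args.length)).foldr max 0) :
    sizeOf (as.map (fun a => a.args.getD j (AVal.mk [] []))) < sizeOf as := by
  induction as with
  | nil => simp at hj
  | cons a as ih =>
      simp only [List.map_cons, List.foldr_cons] at hj
      simp only [List.map_cons, List.cons.sizeOf_spec]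
      rcases Nat.lt_or_ge j a.args.length with h | h
      · have h1 := AVal.sizeOf_getD_lt a j h
        have h2 : sizeOf (as.map (fun a => a.args.getD j (AVal.mk [] []))) ≤ sizeOf as := by
          rcases Nat.lt_or_ge j ((as.map (fun a => a.args.length)).foldr max 0) with h' | h'
          · exact Nat.le_of_lt (ih h')
          · clear ih hj; induction as with
            | nil => simp
            | cons b bs ihb =>
                simp only [List.map_cons, List.foldr_cons] at h' ⊢
                simp only [List.cons.sizeOf_spec]
                have := AVal.sizeOf_getD_le b j
                have := ihb (by omega)
                omega
        omega
      · have hj' : j < (as.map (fun a => a.args.length)).foldr max 0 := by omega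
        have := ih hj'
        have := AVal.sizeOf_getD_le a j
        omega

/-- The combining function `merge c f⃗ [a_1, …, a_c]`: its `i`-th flag is the
conjunction over `k` of the implications `numeric c f⃗ = k ⟹ flags_i(a_k)`, and its
`j`-th argument is `merge c f⃗` of the `j`-th arguments of the `a_k` (a missing
argument being the empty abstract value). -/
def merge {V : Type} (c : ℕ) (fs : List ((V → Bool) → Bool)) (as : List (AVal V)) :
    AVal V :=
  AVal.mk
    ((List.range ((as.map (fun a => a.flags.length)).foldr max 0)).map
      (fun i => fun σ =>
        match numeric c (fs.map (fun f => f σ)) with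
        | none => true
        | some k =>
            match as[k - 1]? with
            | none => true
            | some a =>
                match a.flags[i]? with
                | none => true
                | some g => g σ))
    ((List.range ((as.map (fun a => a.args.length)).foldr max 0)).attach.map
      (fun j => merge c fs (as.map (fun a => a.args.getD j.1 (AVal.mk [] [])))))
termination_by sizeOf as
decreasing_by
  simpa [List.map_attach_eq_pmap, List.pmap_eq_map] using merge_dec as j.1 (by simpa using j.2)

/-- Expressions of the input language: variables, local bindings, calls of globally
defined functions, constructor applications (the constructor given by its type symbol
and its 1-based rank), and complete pattern matches (one branch, consisting of the
pattern variables and the branch body, per constructor of the discriminant's type). -/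
inductive Expr (τ Name FName : Type) : Type where
  | var : Name → Expr τ Name FName
  | lett : Name → Expr τ Name FName → Expr τ Name FName → Expr τ Name FName
  | call : FName → List (Expr τ Name FName) → Expr τ Name FName
  | con : τ → ℕ → List (Expr τ Name FName) → Expr τ Name FName
  | cases : τ → Expr τ Name FName → List (List Name × Expr τ Name FName) →
      Expr τ Name FName

/-- Expressions of the abstract (compiled) language: variables, local bindings,
calls, abstract constructor applications `C'` (given the number `c` of constructors
of the type and the rank `i` of the constructor), and the compiled form of pattern
matches: `amerge c d bs` evaluates `d` to an abstract value `x`, evaluates each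
branch body with the pattern variables bound to the arguments of `x`, and merges the
results according to the flags of `x`. -/
inductive AExpr (Name FName V : Type) : Type where
  | var : Name → AExpr Name FName V
  | lett : Name → AExpr Name FName V → AExpr Name FName V → AExpr Name FName V
  | call : FName → List (AExpr Name FName V) → AExpr Name FName V
  | mkCon : ℕ → ℕ → List (AExpr Name FName V) → AExpr Name FName V
  | amerge : ℕ → AExpr Name FName V → List (List Name × AExpr Name FName V) →
      AExpr Name FName V

lemma sizeOf_snd_lt_of_mem {Name E : Type} [SizeOf Name] [SizeOf E]
    {bs : List (List Name × E)} {b : List Name × E} (h : b ∈ bs) :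
    sizeOf b.2 < sizeOf bs := by
  have h1 := List.sizeOf_lt_of_mem h
  obtain ⟨vs, body⟩ := b
  simp at h1 ⊢
  omega

/-- Compilation of input expressions to abstract expressions. -/
def compile {τ Name FName V : Type} (sig : Signature τ) :
    Expr τ Name FName → AExpr Name FName V
  | .var x => .var x
  | .lett x a b => .lett x (compile sig a) (compile sig b)
  | .call f as => .call f (as.attach.map (fun e => compile sig e.1))
  | .con T i as => .mkCon (sig.ctors T).length i (as.attach.map (fun e => compile sig e.1))
  | .cases T d bs =>
      .amerge (sig.ctors T).length (compile sig d)
        (bs.attach.map (fun b => (b.1.1, compile sig b.1.2)))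
termination_by e => sizeOf e
decreasing_by
  all_goals simp only [Expr.lett.sizeOf_spec, Expr.call.sizeOf_spec,
    Expr.con.sizeOf_spec, Expr.cases.sizeOf_spec]
  · omega
  · omega
  · have h := List.sizeOf_lt_of_mem e.2; omega
  · have h := List.sizeOf_lt_of_mem e.2; omega
  · omega
  · have h := sizeOf_snd_lt_of_mem b.2; omega

/-- `updEnv env x v` updates the environment `env` at `x` by `v`. -/
def updEnv {Name β : Type} [DecidableEq Name] (env : Name → Option β) (x : Name)
    (v : β) : Name → Option β :=
  fun y => if y = x then some v else env y

/-- The environment binding a list of names pointwise to a list of values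
(and nothing else). -/
def bindEnv {Name β : Type} [DecidableEq Name] : List Name → List β → Name → Option β
  | p :: ps, v :: vs, y => if y = p then some v else bindEnv ps vs y
  | _, _, _ => none

/-- `extEnv vs ws env` extends `env` by binding the names `vs` pointwise
to the values `ws`. -/
def extEnv {Name β : Type} [DecidableEq Name] (vs : List Name) (ws : List β)
    (env : Name → Option β) : Name → Option β :=
  fun y => match bindEnv vs ws y with
    | some v => some v
    | none => env y

/- Strict (call-by-value) big-step evaluation of input expressions with respect to a
program `prog` assigning to (some) function names their formal parameters and body.
In a pattern match, the branch corresponding to the constructor of the discriminant's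
value is chosen, with the pattern variables bound to the constructor arguments.
`CEvalList` is the pointwise lifting of `CEval` to lists of expressions. -/
mutual
  /-- Big-step evaluation of input expressions. -/
  inductive CEval {τ Name FName : Type} [DecidableEq Name]
      (prog : FName → Option (List Name × Expr τ Name FName)) :
      (Name → Option Value) → Expr τ Name FName → Value → Prop where
    | var {env x v} : env x = some v → CEval prog env (.var x) v
    | lett {env x a b u v} : CEval prog env a u →
        CEval prog (updEnv env x u) b v → CEval prog env (.lett x a b) v
    | call {env f args params body vals v} : prog f = some (params, body) →
        CEvalList prog env args vals →
        CEval prog (bindEnv params vals) body v →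
        CEval prog env (.call f args) v
    | con {env T i args vals} : CEvalList prog env args vals →
        CEval prog env (.con T i args) (.mk i vals)
    | cases {env T d bs i ws pvs body v} : CEval prog env d (.mk i ws) →
        bs[i - 1]? = some (pvs, body) →
        CEval prog (extEnv pvs ws env) body v →
        CEval prog env (.cases T d bs) v

  /-- Pointwise lifting of `CEval` to lists. -/
  inductive CEvalList {τ Name FName : Type} [DecidableEq Name]
      (prog : FName → Option (List Name × Expr τ Name FName)) :
      (Name → Option Value) → List (Expr τ Name FName) → List Value → Prop where
    | nil {env} : CEvalList prog env [] []
    | cons {env e v es vs} : CEval prog env e v → CEvalList prog env es vs →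
        CEvalList prog env (e :: es) (v :: vs)
end

/- Strict big-step evaluation of abstract expressions with respect to an abstract
program `aprog`.  An abstract constructor application `C'` builds the abstract value
with the constant flags representing the rank-`i` element of `S c` and the values of
the arguments; `amerge` evaluates the discriminant to `x`, each branch body with the
pattern variables bound to the arguments of `x` (a missing argument being the empty
abstract value), and merges the branch results according to the flags of `x`.
`AEvalList` is the pointwise lifting of `AEval` to lists, and
`AEvalBranches aprog env x bs rs` evaluates the branch bodies `bs` (each with its
pattern variables bound to the arguments of `x`) to the abstract values `rs`. -/
mutual
  /-- Big-step evaluation of abstract expressions. -/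
  inductive AEval {Name FName V : Type} [DecidableEq Name]
      (aprog : FName → Option (List Name × AExpr Name FName V)) :
      (Name → Option (AVal V)) → AExpr Name FName V → AVal V → Prop where
    | var {env x a} : env x = some a → AEval aprog env (.var x) a
    | lett {env x a b u w} : AEval aprog env a u →
        AEval aprog (updEnv env x u) b w → AEval aprog env (.lett x a b) w
    | call {env f args params body avals w} : aprog f = some (params, body) →
        AEvalList aprog env args avals →
        AEval aprog (bindEnv params avals) body w →
        AEval aprog env (.call f args) w
    | mkCon {env c i args avals} : AEvalList aprog env args avals →
        AEval aprog env (.mkCon c i args)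
          (.mk ((strOf c i).map (fun b => fun _ => b)) avals)
    | amerge {env c d bs x rs} : AEval aprog env d x →
        AEvalBranches aprog env x bs rs →
        AEval aprog env (.amerge c d bs) (merge c x.flags rs)

  /-- Pointwise lifting of `AEval` to lists. -/
  inductive AEvalList {Name FName V : Type} [DecidableEq Name]
      (aprog : FName → Option (List Name × AExpr Name FName V)) :
      (Name → Option (AVal V)) → List (AExpr Name FName V) → List (AVal V) → Prop where
    | nil {env} : AEvalList aprog env [] []
    | cons {env e a es as} : AEval aprog env e a → AEvalList aprog env es as →
        AEvalList aprog env (e :: es) (a :: as)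

  /-- Evaluation of the branches of a compiled pattern match. -/
  inductive AEvalBranches {Name FName V : Type} [DecidableEq Name]
      (aprog : FName → Option (List Name × AExpr Name FName V)) :
      (Name → Option (AVal V)) → AVal V → List (List Name × AExpr Name FName V) →
      List (AVal V) → Prop where
    | nil {env x} : AEvalBranches aprog env x [] []
    | cons {env x pvs body r bs rs} :
        AEval aprog
          (extEnv pvs
            ((List.range pvs.length).map (fun j => x.args.getD j (AVal.mk [] [])))
            env)
          body r →
        AEvalBranches aprog env x bs rs →
        AEvalBranches aprog env x ((pvs, body) :: bs) (r :: rs)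
end

/-- Pointwise decoding of an abstract environment under a typing environment `Γ` and
an assignment `σ`. -/
def decodeEnv {τ Name V : Type} (sig : Signature τ) (Γ : Name → Option τ)
    (env : Name → Option (AVal V)) (σ : V → Bool) : Name → Option Value :=
  fun y => match Γ y, env y with
    | some T, some a => decode sig T a σ
    | _, _ => none

/-- An input expression `p` of type `T` (its free variables typed by `Γ`) is
*compiled correctly* if for every abstract environment, every assignment `σ`, every
result `a` of abstract evaluation of `compile p` and every result `v` of concrete
evaluation of `p` in the decoded environment, decoding `a` at `T` under `σ` is
defined and yields `v` — i.e. `decode (avalue (e, compile p), σ) = cvalue (decode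
(e, σ), p)`. -/
def CompiledCorrectly {τ Name FName V : Type} [DecidableEq Name]
    (sig : Signature τ) (prog : FName → Option (List Name × Expr τ Name FName))
    (aprog : FName → Option (List Name × AExpr Name FName V))
    (Γ : Name → Option τ) (p : Expr τ Name FName) (T : τ) : Prop :=
  ∀ (env : Name → Option (AVal V)) (σ : V → Bool) (a : AVal V) (v : Value),
    AEval aprog env (compile sig p) a →
    CEval prog (decodeEnv sig Γ env σ) p v →
    decode sig T a σ = some v

/-!
The discriminant decodes to `C_i(w⃗)`: its flags evaluate to a bit string whose prefix in
`S_c` has rank `i`, and its first arguments decode to `w⃗`. So the `i`-th branch is evaluated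
in an abstract environment that decodes to the concrete one, and its result `r_i` decodes to
the value of the match. It remains to see that merging preserves this. Under `σ` the flags of
`merge_c(f⃗, r⃗)` are those of `r_i` padded with `true`, which does not change the constructor
read off the prefix code, and its arguments are merges of the arguments of the `r_k`, to which
the same argument applies by induction.
-/

theorem numeric_append {n i : ℕ} {w : List Bool} (h : numeric n w = some i) (w' : List Bool) :
    numeric n (w ++ w') = some i := by
  induction n, w using numeric.induct generalizing i with
  | case1 => simp [numeric] at h
  | case2 => simpa [numeric] using h
  | case3 => simp [numeric] at h
  | case4 n w ih => simpa [numeric] using ih (by simpa [numeric] using h)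
  | case5 n w ih =>
    obtain ⟨j, hj, rfl⟩ := Option.map_eq_some_iff.mp (by simpa only [numeric] using h)
    simp only [List.cons_append, numeric, ih hj, Option.map_some]

theorem numeric_of_prefix {n i : ℕ} {w w' : List Bool} (h : numeric n w = some i)
    (hw : w <+: w') : numeric n w' = some i := by
  obtain ⟨t, rfl⟩ := hw
  exact numeric_append h t

section Decode

variable {V τ : Type} (sig : Signature τ) (σ : V → Bool)

theorem length_le_of_decodeList_eq_some {ts : List τ} {as : List (AVal V)} {ws : List Value}
    (h : decodeList sig ts as σ = some ws) : ts.length ≤ as.length := by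
  induction ts generalizing as ws with
  | nil => simp
  | cons t ts ih =>
    rcases as with _ | ⟨a, as⟩
    · simp [decodeList] at h
    · rw [decodeList] at h
      split at h
      · simp at h
      · obtain ⟨ws', h', -⟩ := Option.map_eq_some_iff.mp h
        simpa using ih h'

theorem decode_eq_some_iff {T : τ} {a : AVal V} {v : Value} :
    decode sig T a σ = some v ↔ ∃ i argTys ws,
      numeric (sig.ctors T).length (a.flags.map (· σ)) = some i ∧
      (sig.ctors T)[i - 1]? = some argTys ∧ decodeList sig argTys a.args σ = some ws ∧
      v = .mk i ws := by
  obtain ⟨flags, args⟩ := a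
  rw [decode]
  constructor
  · intro h
    split at h
    · simp at h
    rename_i i hi
    split at h
    · simp at h
    rename_i argTys hT
    split_ifs at h
    obtain ⟨ws, hws, rfl⟩ := Option.map_eq_some_iff.mp h
    exact ⟨i, argTys, ws, hi, hT, hws, rfl⟩
  · rintro ⟨i, argTys, ws, hi, hT, hws, rfl⟩
    simp only [AVal.flags, AVal.args] at hi hws
    simp [hi, hT, hws, length_le_of_decodeList_eq_some sig σ hws]

/-- Only an inclusion of partial decodings: padding flags can make a decoding defined that was
undefined for `a`. -/
def DecodeLE (a b : AVal V) : Prop :=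
  ∀ T v, decode sig T a σ = some v → decode sig T b σ = some v

theorem decodeList_eq_some_of_forall_decodeLE {ts : List τ} {as bs : List (AVal V)}
    {ws : List Value} (hlen : as.length ≤ bs.length)
    (hab : ∀ j (hj : j < as.length), DecodeLE sig σ as[j] bs[j])
    (h : decodeList sig ts as σ = some ws) : decodeList sig ts bs σ = some ws := by
  induction ts generalizing as bs ws with
  | nil => simpa [decodeList] using h
  | cons t ts ih =>
    rcases as with _ | ⟨a, as⟩
    · simp [decodeList] at h
    rcases bs with _ | ⟨b, bs⟩
    · simp at hlen
    rw [decodeList] at h ⊢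
    split at h
    · simp at h
    rename_i v hv
    obtain ⟨ws', h', rfl⟩ := Option.map_eq_some_iff.mp h
    have hb : decode sig t b σ = some v := hab 0 (by simp) t v hv
    rw [hb, ih (by simpa using hlen) (fun j hj => hab (j + 1) (by simpa using hj)) h']
    rfl

theorem decodeLE_of_prefix {a b : AVal V}
    (hflags : a.flags.map (· σ) <+: b.flags.map (· σ)) (hlen : a.args.length ≤ b.args.length)
    (hargs : ∀ j (hj : j < a.args.length), DecodeLE sig σ a.args[j] b.args[j]) :
    DecodeLE sig σ a b := by
  intro T v h
  obtain ⟨i, argTys, ws, hi, hT, hws, rfl⟩ := (decode_eq_some_iff sig σ).mp h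
  exact (decode_eq_some_iff sig σ).mpr ⟨i, argTys, ws, numeric_of_prefix hi hflags, hT,
    decodeList_eq_some_of_forall_decodeLE sig σ hlen hargs hws, rfl⟩

end Decode

section Merge

variable {V : Type} (c : ℕ) (fs : List ((V → Bool) → Bool))

theorem merge_args (rs : List (AVal V)) :
    (merge c fs rs).args = (List.range ((rs.map (·.args.length)).foldr max 0)).map
      (fun j => merge c fs (rs.map (·.args.getD j (.mk [] [])))) := by
  rw [merge, AVal.args]
  exact List.attach_map_val (f := fun j => merge c fs (rs.map (·.args.getD j (.mk [] []))))

theorem merge_flags (rs : List (AVal V)) :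
    (merge c fs rs).flags = (List.range ((rs.map (·.flags.length)).foldr max 0)).map
      (fun i σ => match numeric c (fs.map (· σ)) with
        | none => true
        | some k => match rs[k - 1]? with
          | none => true
          | some a => match a.flags[i]? with
            | none => true
            | some g => g σ) := by
  rw [merge, AVal.flags]

theorem flags_prefix_flags_merge {σ : V → Bool} {rs : List (AVal V)} {k : ℕ} {r : AVal V}
    (hk : numeric c (fs.map (· σ)) = some k) (hr : rs[k - 1]? = some r) :
    r.flags.map (· σ) <+: (merge c fs rs).flags.map (· σ) := by
  have hle : r.flags.length ≤ (rs.map (·.flags.length)).foldr max 0 :=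
    List.le_max_of_le (List.mem_map_of_mem (List.mem_of_getElem? hr)) le_rfl
  rw [List.prefix_iff_getElem, merge_flags]
  refine ⟨by simpa using hle, fun i hi => ?_⟩
  rw [List.length_map] at hi
  simp [hk, hr, List.getElem?_eq_getElem hi]

theorem decodeLE_merge {τ : Type} (sig : Signature τ) {σ : V → Bool} {rs : List (AVal V)}
    {k : ℕ} {r : AVal V} (hk : numeric c (fs.map (· σ)) = some k) (hr : rs[k - 1]? = some r) :
    DecodeLE sig σ r (merge c fs rs) := by
  induction hN : sizeOf rs using Nat.strong_induction_on generalizing rs r with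
  | _ N ih =>
  have hmax : r.args.length ≤ (rs.map (·.args.length)).foldr max 0 :=
    List.le_max_of_le (List.mem_map_of_mem (List.mem_of_getElem? hr)) le_rfl
  refine decodeLE_of_prefix sig σ (flags_prefix_flags_merge c fs hk hr) ?_ fun j hj => ?_
  · simpa [merge_args] using hmax
  · simp only [merge_args, List.getElem_map, List.getElem_range]
    refine ih _ (hN ▸ merge_dec rs j (by omega)) ?_ rfl
    simp [hr, List.getElem?_eq_getElem hj]

end Merge

theorem List.map_range_getD_eq_take {α : Type} (l : List α) (d : α) {n : ℕ} (hn : n ≤ l.length) :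
    (List.range n).map (l.getD · d) = l.take n := by
  apply List.ext_getElem (by simpa using hn)
  intro j hj _
  simp at hj
  simp [List.getElem?_eq_getElem (by omega : j < l.length)]

section Env

variable {V τ Name : Type} [DecidableEq Name] (sig : Signature τ) (σ : V → Bool)

theorem decodeList_take {ts : List τ} {as : List (AVal V)} {n : ℕ} (hn : ts.length ≤ n) :
    decodeList sig ts (as.take n) σ = decodeList sig ts as σ := by
  induction ts generalizing as n with
  | nil => simp [decodeList]
  | cons t ts ih =>
    obtain ⟨n, rfl⟩ : ∃ m, n = m + 1 := ⟨n - 1, by simp at hn; omega⟩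
    rcases as with _ | ⟨a, as⟩
    · rfl
    · simp only [List.take_succ_cons, decodeList, ih (by simpa using hn)]

theorem extEnv_cons {β : Type} (p : Name) (ps : List Name) (w : β) (ws : List β)
    (env : Name → Option β) (y : Name) :
    extEnv (p :: ps) (w :: ws) env y = if y = p then some w else extEnv ps ws env y := by
  unfold extEnv
  split_ifs <;> simp [bindEnv, *]

theorem decodeEnv_extEnv {Γ : Name → Option τ} {env : Name → Option (AVal V)} {pvs : List Name}
    {ts : List τ} {as : List (AVal V)} {ws : List Value} (hlen : pvs.length = ts.length)
    (h : decodeList sig ts as σ = some ws) :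
    decodeEnv sig (extEnv pvs ts Γ) (extEnv pvs as env) σ =
      extEnv pvs ws (decodeEnv sig Γ env σ) := by
  induction pvs generalizing ts as ws with
  | nil => funext y; simp [decodeEnv, extEnv, bindEnv]
  | cons p pvs ih =>
    obtain ⟨t, ts, rfl⟩ := List.exists_cons_of_length_eq_add_one hlen.symm
    rcases as with _ | ⟨a, as⟩
    · simp [decodeList] at h
    rw [decodeList] at h
    split at h
    · simp at h
    rename_i w hw
    obtain ⟨ws, hws, rfl⟩ := Option.map_eq_some_iff.mp h
    funext y
    have hy := congrFun (ih (by simpa using hlen) hws) y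
    by_cases hyp : y = p <;> simp_all [decodeEnv, extEnv_cons]

end Env

theorem compile_cases {τ Name FName V : Type} (sig : Signature τ) (T : τ) (d : Expr τ Name FName)
    (bs : List (List Name × Expr τ Name FName)) :
    (compile sig (.cases T d bs) : AExpr Name FName V) =
      .amerge (sig.ctors T).length (compile sig d) (bs.map fun b => (b.1, compile sig b.2)) := by
  rw [compile]
  congr 1
  exact List.attach_map_val
    (f := fun b : List Name × Expr τ Name FName => (b.1, (compile sig b.2 : AExpr Name FName V)))

theorem AEvalBranches.exists_of_getElem? {Name FName V : Type} [DecidableEq Name]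
    {aprog : FName → Option (List Name × AExpr Name FName V)} {env : Name → Option (AVal V)}
    {x : AVal V} {bl : List (List Name × AExpr Name FName V)} {rs : List (AVal V)}
    (h : AEvalBranches aprog env x bl rs) {j : ℕ} {pvs : List Name} {body : AExpr Name FName V}
    (hb : bl[j]? = some (pvs, body)) :
    ∃ r, rs[j]? = some r ∧ AEval aprog
      (extEnv pvs ((List.range pvs.length).map (x.args.getD · (.mk [] []))) env) body r := by
  induction bl generalizing rs j with
  | nil => simp at hb
  | cons b bl ih =>
    cases h with
    | cons hbody hrest =>
      cases j with
      | zero => cases hb; exact ⟨_, rfl, hbody⟩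
      | succ j => exact ih hrest hb

/-- Correctness of compilation, pattern matches: let
`m = case d of {C_1 v⃗ → e_1; …; C_c v⃗ → e_c}` be a complete pattern match on a
discriminant `d` of type `T` with `c` constructors, where `d` is compiled correctly
at `T` and each branch body is compiled correctly at the result type `U` under the
typing extended by the pattern variables at the argument types of the corresponding
constructor.  Then `m` is compiled correctly. -/
theorem compile_correct_cases {τ Name FName V : Type} [DecidableEq Name]
    (sig : Signature τ) (prog : FName → Option (List Name × Expr τ Name FName))
    (aprog : FName → Option (List Name × AExpr Name FName V))
    (haprog : ∀ f params body, prog f = some (params, body) →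
      aprog f = some (params, compile sig body))
    (Γ : Name → Option τ) (T U : τ) (d : Expr τ Name FName)
    (bs : List (List Name × Expr τ Name FName))
    (hd : CompiledCorrectly sig prog aprog Γ d T)
    (hlen : bs.length = (sig.ctors T).length)
    (harity : ∀ (k : ℕ) (argTys : List τ) (pvs : List Name)
      (body : Expr τ Name FName), (sig.ctors T)[k]? = some argTys →
      bs[k]? = some (pvs, body) → pvs.length = argTys.length)
    (hbodies : ∀ (k : ℕ) (argTys : List τ) (pvs : List Name)
      (body : Expr τ Name FName), (sig.ctors T)[k]? = some argTys →
      bs[k]? = some (pvs, body) →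
      CompiledCorrectly sig prog aprog (extEnv pvs argTys Γ) body U) :
    CompiledCorrectly sig prog aprog Γ (.cases T d bs) U := by
  intro env σ a v hA hC
  rw [compile_cases] at hA
  obtain _ | _ | _ | _ | @⟨_, _, _, _, x, rs, hx, hbranches⟩ := hA
  obtain _ | _ | _ | _ | @⟨_, _, _, _, i, ws, pvs, body, _, hdv, hb, hbody⟩ := hC
  obtain ⟨i, argTys, ws, hnum, hT, hws, ⟨⟩⟩ :=
    (decode_eq_some_iff sig σ).mp (hd env σ x _ hx hdv)
  obtain ⟨r, hr, hr_eval⟩ := hbranches.exists_of_getElem? (j := i - 1) (pvs := pvs)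
    (body := compile sig body) (by simp [hb])
  have hpvs := harity _ _ _ _ hT hb
  have henv : decodeEnv sig (extEnv pvs argTys Γ)
      (extEnv pvs ((List.range pvs.length).map (x.args.getD · (.mk [] []))) env) σ =
      extEnv pvs ws (decodeEnv sig Γ env σ) := by
    refine decodeEnv_extEnv sig σ hpvs ?_
    rw [List.map_range_getD_eq_take _ _ (hpvs ▸ length_le_of_decodeList_eq_some sig σ hws),
      decodeList_take sig σ hpvs.ge, hws]
  exact decodeLE_merge _ _ sig hnum hr U v
    (hbodies _ _ _ _ hT hb _ σ r v hr_eval (henv ▸ hbody))
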